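/- arXiv:2102.04630 — 2 statements merged into one kernel-verified Lean document; each statement's English description precedes it below -/
import Mathlib

section
/- Let h > 0 and let u : ℤ² → ℝ (encoding a function on the lattice hℤ²) solve Lu_i = f(i, u_i) for all i ∈ ℤ², where the source term f satisfies the structural condition (H⁺) with data L_f⁺ and κ₀⁺. Assume the nondegeneracy condition holds, that κ₁⁺ < +∞ and κ₂⁺ < +∞, and that for some ϑ∞⁺ ∈ (−π,π] the quantities κ₃⁺, κ₄⁺, κ₅⁺, κ₆⁺, κ₇⁺ are all finite. Then Σ_{i∈ℤ², j∈{1,2}} (ρ_i⁺)²( |Dⱼ⁺ϑ_i⁺|² + |Dⱼ⁻ϑ_i⁺|² ) ≤ C·h, where C := 4( κ₂⁺ + 2e^{2π}κ₃⁺ + 2e^{2π}κ₄⁺ + 2κ₅⁺ + κ₆⁺ + κ₇⁺ ). -/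
/-!
Write `U⁺ = ρ⁺ e^{𝒾ϑ⁺}`. The angular flux `wᵢⱼ = Im (conj Uᵢ⁺ · U⁺_{i+eⱼ}) = ρᵢ ρ_{i+eⱼ} sin δᵢⱼ`,
`δᵢⱼ = ϑ_{i+eⱼ} - ϑᵢ`, through the lattice edge `(i, i + eⱼ)` is divergence free up to `κ₀⁺ h³ ρᵢ`
by the equation and (H⁺). Summing its divergence by parts against `ϑ⁺ - ϑ∞⁺` gives
`|Σ wᵢⱼ δᵢⱼ| ≤ h³ κ₅⁺`. Replacing `ρᵢ ρ_{i+eⱼ} sin δ` by `(ρᵢ² + ρ_{i+eⱼ}²) δ / 2` turns `wᵢⱼ δᵢⱼ`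
into `h²/2 (ρᵢ² |Dⱼ⁺ϑᵢ|² + ρ_{i+eⱼ}² |Dⱼ⁻ϑ_{i+eⱼ}|²)`, at a cost of `h³` times the summands of
`κ₃⁺, κ₄⁺, κ₇⁺` at both ends of the edge. Altogether the left-hand side is at most
`2h (κ₅⁺ + 2κ₃⁺ + 2πκ₄⁺ + 2κ₇⁺)`; the bound `κ₁⁺` on `ρ⁺` makes all the series converge.
-/

noncomputable section

open Real

namespace FK

/-- Lattice unit vectors `e₁ = (1,0)`, `e₂ = (0,1)`. -/
def ee : Fin 2 → ℤ × ℤ := ![(1, 0), (0, 1)]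

/-- Forward difference quotient `Dⱼ⁺u_i := (u_{i+eⱼ} − u_i)/h`. -/
def Dp (h : ℝ) (u : ℤ × ℤ → ℝ) (j : Fin 2) (i : ℤ × ℤ) : ℝ :=
  (u (i + ee j) - u i) / h

/-- Backward difference quotient `Dⱼ⁻u_i := (u_i − u_{i−eⱼ})/h`. -/
def Dm (h : ℝ) (u : ℤ × ℤ → ℝ) (j : Fin 2) (i : ℤ × ℤ) : ℝ :=
  (u i - u (i - ee j)) / h

/-- Directional operator `Lⱼu_i := (u_{i+eⱼ} + u_{i−eⱼ} − 2u_i)/h²`. -/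
def Lj (h : ℝ) (u : ℤ × ℤ → ℝ) (j : Fin 2) (i : ℤ × ℤ) : ℝ :=
  (u (i + ee j) + u (i - ee j) - 2 * u i) / h ^ 2

/-- Discrete Laplacian `Lu_i := L₁u_i + L₂u_i`. -/
def Lap (h : ℝ) (u : ℤ × ℤ → ℝ) (i : ℤ × ℤ) : ℝ :=
  Lj h u 0 i + Lj h u 1 i

/-- `U_i⁺ := D₁⁺u_i + 𝒾·D₂⁺u_i`. -/
def Up (h : ℝ) (u : ℤ × ℤ → ℝ) (i : ℤ × ℤ) : ℂ :=
  (Dp h u 0 i : ℂ) + Complex.I * (Dp h u 1 i : ℂ)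

/-- `ρ_i⁺ := |U_i⁺|`. -/
def rhoP (h : ℝ) (u : ℤ × ℤ → ℝ) (i : ℤ × ℤ) : ℝ := ‖Up h u i‖

/-- `ϑ_i⁺ ∈ (−π,π]`, the argument of `U_i⁺`. -/
def thetaP (h : ℝ) (u : ℤ × ℤ → ℝ) (i : ℤ × ℤ) : ℝ := (Up h u i).arg

/-- `U_i⁻ := D₁⁻u_i + 𝒾·D₂⁻u_i`. -/
def Um (h : ℝ) (u : ℤ × ℤ → ℝ) (i : ℤ × ℤ) : ℂ :=
  (Dm h u 0 i : ℂ) + Complex.I * (Dm h u 1 i : ℂ)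

/-- `ρ_i⁻ := |U_i⁻|`. -/
def rhoM (h : ℝ) (u : ℤ × ℤ → ℝ) (i : ℤ × ℤ) : ℝ := ‖Um h u i‖

/-- `ϑ_i⁻ ∈ (−π,π]`, the argument of `U_i⁻`. -/
def thetaM (h : ℝ) (u : ℤ × ℤ → ℝ) (i : ℤ × ℤ) : ℝ := (Um h u i).arg

/-- Structural condition (H⁺) on a source term `f` with data `Lf` and `k0`. -/
def Hplus (h : ℝ) (u : ℤ × ℤ → ℝ) (f Lf : ℤ × ℤ → ℝ → ℝ) (k0 : ℝ) : Prop :=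
  ∀ i : ℤ × ℤ,
    (∑ j : Fin 2,
        |f (i + ee j) (u (i + ee j)) - f i (u i) - Lf i (u i) * (u (i + ee j) - u i)| / h)
      ≤ k0 * h

/-- Structural condition (H⁻) on a source term `f` with data `Lf` and `k0`. -/
def Hminus (h : ℝ) (u : ℤ × ℤ → ℝ) (f Lf : ℤ × ℤ → ℝ → ℝ) (k0 : ℝ) : Prop :=
  ∀ i : ℤ × ℤ,
    (∑ j : Fin 2,
        |f i (u i) - f (i - ee j) (u (i - ee j)) - Lf i (u i) * (u i - u (i - ee j))| / h)
      ≤ k0 * h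

/-- Forward nondegeneracy condition. -/
def NondegP (u : ℤ × ℤ → ℝ) : Prop :=
  ∀ i : ℤ × ℤ, 0 < (u (i + ee 0) - u i) ^ 2 + (u (i + ee 1) - u i) ^ 2

/-- Backward nondegeneracy condition. -/
def NondegM (u : ℤ × ℤ → ℝ) : Prop :=
  ∀ i : ℤ × ℤ, 0 < (u (i - ee 0) - u i) ^ 2 + (u (i - ee 1) - u i) ^ 2

end FK

open FK

namespace Real

theorem abs_sin_sub_self_le (x : ℝ) : |sin x - x| ≤ |x| ^ 3 / 6 := by
  have key : ∀ y : ℝ, 0 ≤ y → |sin y - y| ≤ y ^ 3 / 6 := fun y hy => by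
    rw [abs_sub_comm, abs_of_nonneg (sub_nonneg.mpr (sin_le hy))]
    linarith [sin_ge_sub_cube hy]
  rcases le_total 0 x with hx | hx
  · simpa [abs_of_nonneg hx] using key x hx
  · simpa [abs_of_nonpos hx, sin_neg, abs_sub_comm, neg_add_eq_sub, ← abs_neg (sin x - x)]
      using key (-x) (neg_nonneg.mpr hx)

end Real

theorem Summable.comp_fst_of_nonneg {α β : Type*} [Finite β] {g : α → ℝ} (hg : Summable g)
    (hg₀ : 0 ≤ g) : Summable fun p : α × β => g p.1 :=
  (hg.mul_of_nonneg (Summable.of_finite (f := fun _ : β => (1 : ℝ))) hg₀ fun _ => zero_le_one).congr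
    fun _ => mul_one _

namespace FK

variable {h : ℝ} {u : ℤ × ℤ → ℝ}

/-- Defect of `a b sin δ ≈ (a² + b²) δ / 2`, an approximation for `a ≈ b` and small `δ`. -/
def sinDefect (a b δ : ℝ) : ℝ := a * b * sin δ - (a ^ 2 + b ^ 2) / 2 * δ

theorem sinDefect_comm (a b δ : ℝ) : sinDefect a b δ = sinDefect b a δ := by
  unfold sinDefect; ring

theorem abs_sinDefect_le {a b δ : ℝ} (ha : 0 ≤ a) (hb : 0 ≤ b) (hδ : |δ| ≤ 2 * π) :
    |sinDefect a b δ| ≤ a ^ 2 * |δ| ^ 3 + π * a * |b - a| * |δ| ^ 2 + |b - a| ^ 2 * |δ| := by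
  have hsplit : sinDefect a b δ = a * b * (sin δ - δ) - (b - a) ^ 2 / 2 * δ := by
    unfold sinDefect; ring
  have hab : a * b ≤ a ^ 2 + a * |b - a| := by nlinarith [le_abs_self (b - a)]
  have hcube : |δ| ^ 3 ≤ 2 * π * |δ| ^ 2 := by
    rw [pow_succ']; exact mul_le_mul_of_nonneg_right hδ (by positivity)
  have hsin := Real.abs_sin_sub_self_le δ
  calc |sinDefect a b δ|
      ≤ a * b * |sin δ - δ| + (b - a) ^ 2 / 2 * |δ| := by
        rw [hsplit]
        refine (abs_sub _ _).trans (le_of_eq ?_)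
        rw [abs_mul, abs_mul, abs_mul, abs_of_nonneg ha, abs_of_nonneg hb,
          abs_of_nonneg (by positivity : (0:ℝ) ≤ (b - a) ^ 2 / 2)]
    _ ≤ (a ^ 2 + a * |b - a|) * (|δ| ^ 3 / 6) + |b - a| ^ 2 / 2 * |δ| := by
        rw [sq_abs]
        gcongr
    _ ≤ a ^ 2 * |δ| ^ 3 + π * a * |b - a| * |δ| ^ 2 + |b - a| ^ 2 * |δ| := by
        have : 0 ≤ a * |b - a| := by positivity
        nlinarith [mul_le_mul_of_nonneg_left hcube this, pow_nonneg (abs_nonneg δ) 3,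
          mul_nonneg (sq_nonneg (|b - a|)) (abs_nonneg δ), sq_nonneg a]

/-- `r` stands for a modulus, `t` for an angle gradient, `d` for a modulus gradient. -/
def sinDefectBound (r t d : ℝ) : ℝ := r ^ 2 * t ^ 3 + π * r * d * t ^ 2 + d ^ 2 * t

theorem sinDefectBound_nonneg {r t d : ℝ} (hr : 0 ≤ r) (ht : 0 ≤ t) (hd : 0 ≤ d) :
    0 ≤ sinDefectBound r t d := by
  unfold sinDefectBound; positivity

theorem abs_sinDefect_le_of_eq_mul {a b δ h t d : ℝ} (ha : 0 ≤ a) (hb : 0 ≤ b)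
    (hδ : |δ| ≤ 2 * π) (ht : |δ| = h * t) (hd : |b - a| = h * d) :
    |sinDefect a b δ| ≤ h ^ 3 * sinDefectBound a t d :=
  (abs_sinDefect_le ha hb hδ).trans_eq (by rw [ht, hd, sinDefectBound]; ring)

/-- The edge from `i` to `i + eⱼ` is encoded as `(i, j)`; this shifts it to the next edge. -/
def edgeShift : (ℤ × ℤ) × Fin 2 ≃ (ℤ × ℤ) × Fin 2 where
  toFun p := (p.1 + ee p.2, p.2)
  invFun p := (p.1 - ee p.2, p.2)
  left_inv p := by simp
  right_inv p := by simp

@[simp] theorem edgeShift_apply (p : (ℤ × ℤ) × Fin 2) : edgeShift p = (p.1 + ee p.2, p.2) :=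
  rfl

@[simp] theorem edgeShift_symm_apply (p : (ℤ × ℤ) × Fin 2) :
    edgeShift.symm p = (p.1 - ee p.2, p.2) :=
  rfl

theorem Dm_add_ee (v : ℤ × ℤ → ℝ) (j : Fin 2) (i : ℤ × ℤ) : Dm h v j (i + ee j) = Dp h v j i := by
  simp [Dm, Dp]

@[simp] theorem Up_re (i : ℤ × ℤ) : (Up h u i).re = Dp h u 0 i := by simp [Up]

@[simp] theorem Up_im (i : ℤ × ℤ) : (Up h u i).im = Dp h u 1 i := by simp [Up]

theorem rhoP_nonneg (i : ℤ × ℤ) : 0 ≤ rhoP h u i := norm_nonneg _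

theorem abs_Dp_le_rhoP (j : Fin 2) (i : ℤ × ℤ) : |Dp h u j i| ≤ rhoP h u i := by
  fin_cases j
  · simpa [rhoP] using Complex.abs_re_le_norm (Up h u i)
  · simpa [rhoP] using Complex.abs_im_le_norm (Up h u i)

theorem rhoP_le {κ₁ : ℝ} (hκ₁ : ∀ (i : ℤ × ℤ) (j : Fin 2), |Dp h u j i| ≤ κ₁) (i : ℤ × ℤ) :
    rhoP h u i ≤ 2 * κ₁ := by
  have : rhoP h u i ≤ |Dp h u 0 i| + |Dp h u 1 i| := by
    simpa only [rhoP, Up_re, Up_im] using Complex.norm_le_abs_re_add_abs_im (Up h u i)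
  linarith [hκ₁ i 0, hκ₁ i 1]

theorem Dp_zero_eq (i : ℤ × ℤ) : Dp h u 0 i = rhoP h u i * cos (thetaP h u i) := by
  rw [rhoP, thetaP, Complex.norm_mul_cos_arg, Up_re]

theorem Dp_one_eq (i : ℤ × ℤ) : Dp h u 1 i = rhoP h u i * sin (thetaP h u i) := by
  rw [rhoP, thetaP, Complex.norm_mul_sin_arg, Up_im]

theorem abs_thetaP_sub_le (a b : ℤ × ℤ) : |thetaP h u a - thetaP h u b| ≤ 2 * π :=
  (Complex.abs_arg_sub_arg_lt _ _).le

/-- The discrete angular flux `Im (conj U_i · U_{i+eⱼ})` through the edge `p = (i, j)`. -/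
def flux (h : ℝ) (u : ℤ × ℤ → ℝ) (p : (ℤ × ℤ) × Fin 2) : ℝ :=
  Dp h u 0 p.1 * Dp h u 1 (p.1 + ee p.2) - Dp h u 1 p.1 * Dp h u 0 (p.1 + ee p.2)

theorem flux_eq (p : (ℤ × ℤ) × Fin 2) :
    flux h u p = rhoP h u p.1 * rhoP h u (p.1 + ee p.2) *
      sin (thetaP h u (p.1 + ee p.2) - thetaP h u p.1) := by
  rw [flux, Dp_zero_eq, Dp_one_eq, Dp_zero_eq, Dp_one_eq, sin_sub]
  ring

theorem abs_flux_le (p : (ℤ × ℤ) × Fin 2) :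
    |flux h u p| ≤ rhoP h u p.1 * rhoP h u (p.1 + ee p.2) := by
  rw [flux_eq, abs_mul, abs_of_nonneg (mul_nonneg (rhoP_nonneg _) (rhoP_nonneg _))]
  exact mul_le_of_le_one_right (mul_nonneg (rhoP_nonneg _) (rhoP_nonneg _)) (abs_sin_le_one _)

theorem sum_flux_sub_flux_eq (hh : h ≠ 0) (i : ℤ × ℤ) :
    ∑ j : Fin 2, (flux h u (i, j) - flux h u (i - ee j, j)) =
      h * (Dp h u 0 i * (Lap h u (i + ee 1) - Lap h u i)
        - Dp h u 1 i * (Lap h u (i + ee 0) - Lap h u i)) := by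
  obtain ⟨x, y⟩ := i
  simp only [Fin.sum_univ_two, flux, Dp, Lap, Lj, ee, Matrix.cons_val_zero, Matrix.cons_val_one,
    Prod.mk_add_mk, Prod.mk_sub_mk, add_zero, sub_zero, add_sub_cancel_right, sub_add_cancel]
  field_simp
  ring

/-- The linear part `L_f⁺` of the source cancels out of the divergence. -/
theorem abs_sum_flux_sub_flux_le (hh : 0 < h) {f Lf : ℤ × ℤ → ℝ → ℝ} {κ₀ : ℝ}
    (heq : ∀ i, Lap h u i = f i (u i)) (hH : Hplus h u f Lf κ₀) (i : ℤ × ℤ) :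
    |∑ j : Fin 2, (flux h u (i, j) - flux h u (i - ee j, j))| ≤ κ₀ * h ^ 3 * rhoP h u i := by
  set E : Fin 2 → ℝ := fun j =>
    f (i + ee j) (u (i + ee j)) - f i (u i) - Lf i (u i) * (u (i + ee j) - u i)
  have hE : |E 0| + |E 1| ≤ κ₀ * h ^ 2 := by
    have := hH i
    rw [Fin.sum_univ_two, ← add_div, div_le_iff₀ hh] at this
    linarith
  have hdiv : ∑ j : Fin 2, (flux h u (i, j) - flux h u (i - ee j, j)) =
      h * (Dp h u 0 i * E 1 - Dp h u 1 i * E 0) := by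
    rw [sum_flux_sub_flux_eq hh.ne', heq, heq, heq]
    simp only [E, Dp]
    field_simp
    ring
  have h0 := abs_Dp_le_rhoP (h := h) (u := u) 0 i
  have h1 := abs_Dp_le_rhoP (h := h) (u := u) 1 i
  calc |∑ j : Fin 2, (flux h u (i, j) - flux h u (i - ee j, j))|
      ≤ h * (|Dp h u 0 i| * |E 1| + |Dp h u 1 i| * |E 0|) := by
        rw [hdiv, abs_mul, abs_of_pos hh, ← abs_mul, ← abs_mul]
        exact mul_le_mul_of_nonneg_left (abs_sub _ _) hh.le
    _ ≤ h * (rhoP h u i * (|E 0| + |E 1|)) := by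
        gcongr h * ?_
        nlinarith [abs_nonneg (E 0), abs_nonneg (E 1)]
    _ ≤ κ₀ * h ^ 3 * rhoP h u i := by
        have := mul_nonneg hh.le (rhoP_nonneg (h := h) (u := u) i)
        nlinarith [mul_le_mul_of_nonneg_left hE this]

/-- Summation by parts over the edges of `ℤ²`. -/
theorem hasSum_sum_sub_shift_mul {F : (ℤ × ℤ) × Fin 2 → ℝ} {φ : ℤ × ℤ → ℝ}
    (h₁ : Summable fun p => F p * φ p.1) (h₂ : Summable fun p => F p * φ (p.1 + ee p.2)) :
    HasSum (fun i => (∑ j : Fin 2, (F (i, j) - F (i - ee j, j))) * φ i)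
      (∑' p, F p * (φ p.1 - φ (p.1 + ee p.2))) := by
  have h₂' : Summable fun p => F (edgeShift.symm p) * φ p.1 :=
    (edgeShift.symm.summable_iff.mpr h₂).congr fun p => by simp
  have hshift : ∑' p, F (edgeShift.symm p) * φ p.1 = ∑' p, F p * φ (p.1 + ee p.2) := by
    rw [← edgeShift.symm.tsum_eq (fun p => F p * φ (p.1 + ee p.2))]
    simp
  have hval : ∑' p, F p * (φ p.1 - φ (p.1 + ee p.2)) =
      ∑' p, (F p * φ p.1 - F (edgeShift.symm p) * φ p.1) := by
    rw [h₁.tsum_sub h₂', hshift, ← h₁.tsum_sub h₂]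
    simp only [mul_sub]
  rw [hval]
  refine ((h₁.sub h₂').hasSum.prod_fiberwise fun i => hasSum_fintype _).congr_fun fun i => ?_
  simp only [edgeShift_symm_apply, Finset.sum_mul, sub_mul]

def defectDensity (h : ℝ) (u : ℤ × ℤ → ℝ) (θinf : ℝ) (q : (ℤ × ℤ) × Fin 2) : ℝ :=
  (sinDefectBound (rhoP h u q.1) |Dp h (thetaP h u) q.2 q.1| |Dp h (rhoP h u) q.2 q.1| +
    sinDefectBound (rhoP h u q.1) |Dm h (thetaP h u) q.2 q.1| |Dm h (rhoP h u) q.2 q.1|) *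
    |thetaP h u q.1 - θinf|

theorem hasSum_defectDensity {θinf κ₃ κ₄ κ₇ : ℝ}
    (hκ₃ : HasSum (fun p : (ℤ × ℤ) × Fin 2 =>
      (rhoP h u p.1) ^ 2 *
        (|Dp h (thetaP h u) p.2 p.1| ^ 3 + |Dm h (thetaP h u) p.2 p.1| ^ 3) *
        |thetaP h u p.1 - θinf|) κ₃)
    (hκ₄ : HasSum (fun p : (ℤ × ℤ) × Fin 2 =>
      rhoP h u p.1 *
        (|Dp h (rhoP h u) p.2 p.1| * |Dp h (thetaP h u) p.2 p.1| ^ 2 +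
         |Dm h (rhoP h u) p.2 p.1| * |Dm h (thetaP h u) p.2 p.1| ^ 2) *
        |thetaP h u p.1 - θinf|) κ₄)
    (hκ₇ : HasSum (fun p : (ℤ × ℤ) × Fin 2 =>
      (|Dp h (rhoP h u) p.2 p.1| ^ 2 * |Dp h (thetaP h u) p.2 p.1| +
       |Dm h (rhoP h u) p.2 p.1| ^ 2 * |Dm h (thetaP h u) p.2 p.1|) *
      |thetaP h u p.1 - θinf|) κ₇) :
    HasSum (defectDensity h u θinf) (κ₃ + π * κ₄ + κ₇) :=
  ((hκ₃.add (hκ₄.mul_left π)).add hκ₇).congr_fun fun q => by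
    simp only [defectDensity, sinDefectBound]; ring

theorem abs_sub_eq_mul_abs_Dp (hh : 0 < h) (v : ℤ × ℤ → ℝ) (j : Fin 2) (i : ℤ × ℤ) :
    |v (i + ee j) - v i| = h * |Dp h v j i| := by
  rw [Dp, abs_div, abs_of_pos hh, mul_div_cancel₀ _ hh.ne']

theorem abs_sinDefect_mul_le (hh : 0 < h) (θinf : ℝ) (p : (ℤ × ℤ) × Fin 2) :
    |sinDefect (rhoP h u p.1) (rhoP h u (p.1 + ee p.2))
        (thetaP h u (p.1 + ee p.2) - thetaP h u p.1)| * |thetaP h u p.1 - θinf| ≤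
      h ^ 3 * defectDensity h u θinf p := by
  have hbound := abs_sinDefect_le_of_eq_mul (rhoP_nonneg p.1) (rhoP_nonneg (p.1 + ee p.2))
    (abs_thetaP_sub_le (h := h) (u := u) _ _) (abs_sub_eq_mul_abs_Dp hh (thetaP h u) p.2 p.1)
    (abs_sub_eq_mul_abs_Dp hh (rhoP h u) p.2 p.1)
  have hDm := sinDefectBound_nonneg (rhoP_nonneg (h := h) (u := u) p.1)
    (abs_nonneg (Dm h (thetaP h u) p.2 p.1)) (abs_nonneg (Dm h (rhoP h u) p.2 p.1))
  rw [defectDensity, ← mul_assoc]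
  gcongr
  exact hbound.trans (by gcongr; linarith)

theorem abs_sinDefect_mul_le_shift (hh : 0 < h) (θinf : ℝ) (p : (ℤ × ℤ) × Fin 2) :
    |sinDefect (rhoP h u p.1) (rhoP h u (p.1 + ee p.2))
        (thetaP h u (p.1 + ee p.2) - thetaP h u p.1)| * |thetaP h u (p.1 + ee p.2) - θinf| ≤
      h ^ 3 * defectDensity h u θinf (edgeShift p) := by
  have ht : |thetaP h u (p.1 + ee p.2) - thetaP h u p.1| =
      h * |Dm h (thetaP h u) p.2 (p.1 + ee p.2)| := by
    rw [Dm_add_ee, abs_sub_eq_mul_abs_Dp hh]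
  have hd : |rhoP h u p.1 - rhoP h u (p.1 + ee p.2)| =
      h * |Dm h (rhoP h u) p.2 (p.1 + ee p.2)| := by
    rw [Dm_add_ee, abs_sub_comm, abs_sub_eq_mul_abs_Dp hh]
  have hbound := abs_sinDefect_le_of_eq_mul (rhoP_nonneg _) (rhoP_nonneg _)
    (abs_thetaP_sub_le (h := h) (u := u) _ _) ht hd
  have hDp := sinDefectBound_nonneg (rhoP_nonneg (h := h) (u := u) (p.1 + ee p.2))
    (abs_nonneg (Dp h (thetaP h u) p.2 (p.1 + ee p.2)))
    (abs_nonneg (Dp h (rhoP h u) p.2 (p.1 + ee p.2)))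
  rw [sinDefect_comm, edgeShift_apply, defectDensity, ← mul_assoc]
  gcongr
  exact hbound.trans (by gcongr; linarith)

theorem summable_flux_mul {κ₁ θinf : ℝ} (hκ₁ : ∀ (i : ℤ × ℤ) (j : Fin 2), |Dp h u j i| ≤ κ₁)
    (hρθ : Summable fun i => rhoP h u i * |thetaP h u i - θinf|) :
    (Summable fun p => flux h u p * (thetaP h u p.1 - θinf)) ∧
      Summable fun p => flux h u p * (thetaP h u (p.1 + ee p.2) - θinf) := by
  have hm : Summable fun p : (ℤ × ℤ) × Fin 2 => 2 * κ₁ * (rhoP h u p.1 * |thetaP h u p.1 - θinf|) :=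
    (hρθ.comp_fst_of_nonneg fun i => mul_nonneg (rhoP_nonneg i) (abs_nonneg _)).mul_left _
  have hρ := rhoP_le hκ₁
  refine ⟨hm.of_norm_bounded fun p => ?_,
    (edgeShift.summable_iff.mpr hm).of_norm_bounded fun p => ?_⟩
  · calc ‖flux h u p * (thetaP h u p.1 - θinf)‖
        ≤ rhoP h u p.1 * rhoP h u (p.1 + ee p.2) * |thetaP h u p.1 - θinf| := by
          rw [Real.norm_eq_abs, abs_mul]; gcongr; exact abs_flux_le p
      _ ≤ rhoP h u p.1 * (2 * κ₁) * |thetaP h u p.1 - θinf| := by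
          gcongr; · exact rhoP_nonneg _
          exact hρ _
      _ = _ := by ring
  · calc ‖flux h u p * (thetaP h u (p.1 + ee p.2) - θinf)‖
        ≤ rhoP h u p.1 * rhoP h u (p.1 + ee p.2) * |thetaP h u (p.1 + ee p.2) - θinf| := by
          rw [Real.norm_eq_abs, abs_mul]; gcongr; exact abs_flux_le p
      _ ≤ 2 * κ₁ * rhoP h u (p.1 + ee p.2) * |thetaP h u (p.1 + ee p.2) - θinf| := by
          gcongr; · exact rhoP_nonneg _
          exact hρ _
      _ = _ := by simp only [Function.comp_apply, edgeShift_apply]; ring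

theorem exists_hasSum_flux_mul_sub (hh : 0 < h) {f Lf : ℤ × ℤ → ℝ → ℝ} {κ₀ κ₁ κ₅ θinf : ℝ}
    (heq : ∀ i, Lap h u i = f i (u i)) (hH : Hplus h u f Lf κ₀)
    (hκ₁ : ∀ (i : ℤ × ℤ) (j : Fin 2), |Dp h u j i| ≤ κ₁)
    (hρθ : Summable fun i => rhoP h u i * |thetaP h u i - θinf|)
    (hκ₅ : HasSum (fun i => κ₀ * (rhoP h u i * |thetaP h u i - θinf|)) κ₅) :
    ∃ D, HasSum (fun p => flux h u p *
        ((thetaP h u p.1 - θinf) - (thetaP h u (p.1 + ee p.2) - θinf))) D ∧ |D| ≤ h ^ 3 * κ₅ := by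
  obtain ⟨h₁, h₂⟩ := summable_flux_mul hκ₁ hρθ
  refine ⟨_, ((h₁.sub h₂).congr fun p => (mul_sub _ _ _).symm).hasSum, ?_⟩
  have hdiv := hasSum_sum_sub_shift_mul (F := flux h u) (φ := fun i => thetaP h u i - θinf) h₁ h₂
  rw [← hdiv.tsum_eq, ← Real.norm_eq_abs]
  refine tsum_of_norm_bounded (hκ₅.mul_left (h ^ 3)) fun i => ?_
  rw [Real.norm_eq_abs, abs_mul]
  calc _ ≤ κ₀ * h ^ 3 * rhoP h u i * |thetaP h u i - θinf| := by
        gcongr; exact abs_sum_flux_sub_flux_le hh heq hH i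
    _ = _ := by ring

theorem exists_hasSum_sinDefect_mul_sub (hh : 0 < h) {θinf κ : ℝ}
    (hκ : HasSum (defectDensity h u θinf) κ) :
    ∃ E, HasSum (fun p : (ℤ × ℤ) × Fin 2 => sinDefect (rhoP h u p.1) (rhoP h u (p.1 + ee p.2))
        (thetaP h u (p.1 + ee p.2) - thetaP h u p.1) *
        ((thetaP h u (p.1 + ee p.2) - θinf) - (thetaP h u p.1 - θinf))) E ∧
      |E| ≤ h ^ 3 * (κ + κ) := by
  have hm : HasSum (fun p : (ℤ × ℤ) × Fin 2 => h ^ 3 * (defectDensity h u θinf p +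
      defectDensity h u θinf (edgeShift p))) (h ^ 3 * (κ + κ)) :=
    (hκ.add (edgeShift.hasSum_iff.mpr hκ)).mul_left _
  have hb : ∀ p, ‖sinDefect (rhoP h u p.1) (rhoP h u (p.1 + ee p.2))
        (thetaP h u (p.1 + ee p.2) - thetaP h u p.1) *
        ((thetaP h u (p.1 + ee p.2) - θinf) - (thetaP h u p.1 - θinf))‖ ≤
      h ^ 3 * (defectDensity h u θinf p + defectDensity h u θinf (edgeShift p)) := fun p => by
    rw [Real.norm_eq_abs, abs_mul, mul_add]
    refine (mul_le_mul_of_nonneg_left (abs_sub _ _) (abs_nonneg _)).trans ?_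
    rw [mul_add, add_comm (h ^ 3 * _)]
    exact add_le_add (abs_sinDefect_mul_le_shift hh θinf p) (abs_sinDefect_mul_le hh θinf p)
  exact ⟨_, (hm.summable.of_norm_bounded hb).hasSum,
    Real.norm_eq_abs _ ▸ tsum_of_norm_bounded hm hb⟩

def edgeEnergy (h : ℝ) (u : ℤ × ℤ → ℝ) (p : (ℤ × ℤ) × Fin 2) : ℝ :=
  (rhoP h u p.1 ^ 2 + rhoP h u (p.1 + ee p.2) ^ 2) / 2 *
    (thetaP h u (p.1 + ee p.2) - thetaP h u p.1) ^ 2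

theorem edgeEnergy_eq (θinf : ℝ) (p : (ℤ × ℤ) × Fin 2) :
    edgeEnergy h u p =
      -(flux h u p * ((thetaP h u p.1 - θinf) - (thetaP h u (p.1 + ee p.2) - θinf))) -
        sinDefect (rhoP h u p.1) (rhoP h u (p.1 + ee p.2))
            (thetaP h u (p.1 + ee p.2) - thetaP h u p.1) *
          ((thetaP h u (p.1 + ee p.2) - θinf) - (thetaP h u p.1 - θinf)) := by
  rw [edgeEnergy, flux_eq, sinDefect]; ring

/-- Each edge carries the forward gradient of `ϑ⁺` at its tail and the backward one at its head. -/
theorem tsum_ofReal_eq_tsum_edgeEnergy (hh : h ≠ 0) :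
    ∑' p : (ℤ × ℤ) × Fin 2, ENNReal.ofReal
        ((rhoP h u p.1) ^ 2 * (|Dp h (thetaP h u) p.2 p.1| ^ 2 + |Dm h (thetaP h u) p.2 p.1| ^ 2)) =
      ∑' p, ENNReal.ofReal (2 / h ^ 2 * edgeEnergy h u p) := by
  set a : (ℤ × ℤ) × Fin 2 → ℝ := fun p => rhoP h u p.1 ^ 2 * Dp h (thetaP h u) p.2 p.1 ^ 2
  set b : (ℤ × ℤ) × Fin 2 → ℝ := fun p => rhoP h u p.1 ^ 2 * Dm h (thetaP h u) p.2 p.1 ^ 2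
  have hsplit : ∀ p, ENNReal.ofReal
      ((rhoP h u p.1) ^ 2 * (|Dp h (thetaP h u) p.2 p.1| ^ 2 + |Dm h (thetaP h u) p.2 p.1| ^ 2)) =
        ENNReal.ofReal (a p) + ENNReal.ofReal (b p) := fun p => by
    rw [sq_abs, sq_abs, mul_add, ENNReal.ofReal_add (by positivity) (by positivity)]
  have hpair : ∀ p, ENNReal.ofReal (2 / h ^ 2 * edgeEnergy h u p) =
      ENNReal.ofReal (a p) + ENNReal.ofReal (b (edgeShift p)) := fun p => by
    rw [← ENNReal.ofReal_add (by positivity) (by positivity)]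
    congr 1
    simp only [a, b, edgeEnergy, edgeShift_apply, Dm_add_ee, Dp]
    field_simp
  rw [tsum_congr hsplit, tsum_congr hpair, ENNReal.tsum_add, ENNReal.tsum_add,
    edgeShift.tsum_eq (fun p => ENNReal.ofReal (b p))]

end FK

theorem statement0_general
    (h : ℝ) (hh : 0 < h)
    (u : ℤ × ℤ → ℝ) (f Lf : (ℤ × ℤ) → ℝ → ℝ) (κ₀ : ℝ) (hκ₀ : 0 < κ₀)
    (heq : ∀ i : ℤ × ℤ, Lap h u i = f i (u i))
    (hH : Hplus h u f Lf κ₀)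
    (κ₁ : ℝ) (hκ₁ : ∀ (i : ℤ × ℤ) (j : Fin 2), |Dp h u j i| ≤ κ₁)
    (θinf : ℝ)
    (κ₂ κ₃ κ₄ κ₅ κ₆ κ₇ : ℝ)
    (hκ₂ : HasSum (fun p : (ℤ × ℤ) × Fin 2 =>
      (rhoP h u p.1) ^ 2 *
        (|Dp h (thetaP h u) p.2 p.1| * |Dp h (Dp h (thetaP h u) p.2) p.2 (p.1 - ee p.2)| +
         |Dm h (thetaP h u) p.2 p.1| * |Dm h (Dm h (thetaP h u) p.2) p.2 (p.1 + ee p.2)|)) κ₂)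
    (hκ₃ : HasSum (fun p : (ℤ × ℤ) × Fin 2 =>
      (rhoP h u p.1) ^ 2 *
        (|Dp h (thetaP h u) p.2 p.1| ^ 3 + |Dm h (thetaP h u) p.2 p.1| ^ 3) *
        |thetaP h u p.1 - θinf|) κ₃)
    (hκ₄ : HasSum (fun p : (ℤ × ℤ) × Fin 2 =>
      rhoP h u p.1 *
        (|Dp h (rhoP h u) p.2 p.1| * |Dp h (thetaP h u) p.2 p.1| ^ 2 +
         |Dm h (rhoP h u) p.2 p.1| * |Dm h (thetaP h u) p.2 p.1| ^ 2) *
        |thetaP h u p.1 - θinf|) κ₄)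
    (hκ₅ : HasSum (fun i : ℤ × ℤ => κ₀ * (rhoP h u i * |thetaP h u i - θinf|)) κ₅)
    (hκ₆ : HasSum (fun p : (ℤ × ℤ) × Fin 2 =>
      (|Dp h (fun k => (rhoP h u k) ^ 2) p.2 p.1| * |Dp h (Dp h (thetaP h u) p.2) p.2 p.1| +
       |Dm h (fun k => (rhoP h u k) ^ 2) p.2 p.1| * |Dm h (Dm h (thetaP h u) p.2) p.2 p.1| +
       h * (rhoP h u p.1) ^ 2 * |Lj h (Lj h (thetaP h u) p.2) p.2 p.1|) *
      |thetaP h u p.1 - θinf|) κ₆)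
    (hκ₇ : HasSum (fun p : (ℤ × ℤ) × Fin 2 =>
      (|Dp h (rhoP h u) p.2 p.1| ^ 2 * |Dp h (thetaP h u) p.2 p.1| +
       |Dm h (rhoP h u) p.2 p.1| ^ 2 * |Dm h (thetaP h u) p.2 p.1|) *
      |thetaP h u p.1 - θinf|) κ₇) :
    (∑' p : (ℤ × ℤ) × Fin 2, ENNReal.ofReal
        ((rhoP h u p.1) ^ 2 *
          (|Dp h (thetaP h u) p.2 p.1| ^ 2 + |Dm h (thetaP h u) p.2 p.1| ^ 2)))
      ≤ ENNReal.ofReal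
          (4 * (κ₂ + 2 * Real.exp (2 * π) * κ₃ + 2 * Real.exp (2 * π) * κ₄ +
            2 * κ₅ + κ₆ + κ₇) * h) := by
  have hρθ : Summable fun i => rhoP h u i * |thetaP h u i - θinf| :=
    (hκ₅.summable.mul_left κ₀⁻¹).congr fun i => inv_mul_cancel_left₀ hκ₀.ne' _
  obtain ⟨D, hD, hD_le⟩ := exists_hasSum_flux_mul_sub hh heq hH hκ₁ hρθ hκ₅
  obtain ⟨E, hE, hE_le⟩ := exists_hasSum_sinDefect_mul_sub hh (hasSum_defectDensity hκ₃ hκ₄ hκ₇)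
  have henergy : HasSum (edgeEnergy h u) (-D - E) := (hD.neg.sub hE).congr_fun (edgeEnergy_eq θinf)
  have hρ := rhoP_nonneg (h := h) (u := u)
  have hκ₂₆0 : 0 ≤ κ₂ + κ₆ := add_nonneg (hκ₂.nonneg fun p => by positivity)
    (hκ₆.nonneg fun p => by positivity)
  have hκ₃0 : 0 ≤ κ₃ := hκ₃.nonneg fun p => by positivity
  have hκ₄0 : 0 ≤ κ₄ := hκ₄.nonneg fun p => by have := hρ p.1; positivity
  have hκ₅0 : 0 ≤ κ₅ := hκ₅.nonneg fun i => by have := hρ i; positivity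
  have hexp : 2 * π + 1 ≤ exp (2 * π) := add_one_le_exp _
  rw [tsum_ofReal_eq_tsum_edgeEnergy hh.ne', ← ENNReal.ofReal_tsum_of_nonneg
    (fun p => by have := hρ; unfold edgeEnergy; positivity) (henergy.summable.mul_left _),
    tsum_mul_left, henergy.tsum_eq]
  refine ENNReal.ofReal_le_ofReal ?_
  calc 2 / h ^ 2 * (-D - E)
        ≤ 2 / h ^ 2 * (h ^ 3 * κ₅ + h ^ 3 * (κ₃ + π * κ₄ + κ₇ + (κ₃ + π * κ₄ + κ₇))) := by
        gcongr; linarith [neg_abs_le D, neg_abs_le E]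
    _ = 2 * h * (κ₅ + 2 * (κ₃ + π * κ₄ + κ₇)) := by field_simp; ring
    _ ≤ _ := by
        nlinarith [mul_nonneg hh.le hκ₂₆0, mul_nonneg hh.le hκ₅0,
          mul_nonneg (mul_nonneg hh.le hκ₃0) (by linarith [pi_pos] : 0 ≤ 2 * exp (2 * π) - 1),
          mul_nonneg (mul_nonneg hh.le hκ₄0) (by linarith [pi_pos] : 0 ≤ 2 * exp (2 * π) - π)]

/-- Theorem 1.1 / `DGDG` of the paper.  Quantitative rigidity estimate
for solutions of the discrete semilinear equation `Lu_i = f(i,u_i)` on `hℤ²`. -/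
theorem statement0
    (h : ℝ) (hh : 0 < h)
    (u : ℤ × ℤ → ℝ) (f Lf : (ℤ × ℤ) → ℝ → ℝ) (κ₀ : ℝ) (hκ₀ : 0 < κ₀)
    (heq : ∀ i : ℤ × ℤ, Lap h u i = f i (u i))
    (hH : Hplus h u f Lf κ₀)
    (hnd : NondegP u)
    (κ₁ : ℝ) (hκ₁ : ∀ (i : ℤ × ℤ) (j : Fin 2), |Dp h u j i| ≤ κ₁)
    (θinf : ℝ) (hθinf : θinf ∈ Set.Ioc (-π) π)
    (κ₂ κ₃ κ₄ κ₅ κ₆ κ₇ : ℝ)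
    (hκ₂ : HasSum (fun p : (ℤ × ℤ) × Fin 2 =>
      (rhoP h u p.1) ^ 2 *
        (|Dp h (thetaP h u) p.2 p.1| * |Dp h (Dp h (thetaP h u) p.2) p.2 (p.1 - ee p.2)| +
         |Dm h (thetaP h u) p.2 p.1| * |Dm h (Dm h (thetaP h u) p.2) p.2 (p.1 + ee p.2)|)) κ₂)
    (hκ₃ : HasSum (fun p : (ℤ × ℤ) × Fin 2 =>
      (rhoP h u p.1) ^ 2 *
        (|Dp h (thetaP h u) p.2 p.1| ^ 3 + |Dm h (thetaP h u) p.2 p.1| ^ 3) *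
        |thetaP h u p.1 - θinf|) κ₃)
    (hκ₄ : HasSum (fun p : (ℤ × ℤ) × Fin 2 =>
      rhoP h u p.1 *
        (|Dp h (rhoP h u) p.2 p.1| * |Dp h (thetaP h u) p.2 p.1| ^ 2 +
         |Dm h (rhoP h u) p.2 p.1| * |Dm h (thetaP h u) p.2 p.1| ^ 2) *
        |thetaP h u p.1 - θinf|) κ₄)
    (hκ₅ : HasSum (fun i : ℤ × ℤ => κ₀ * (rhoP h u i * |thetaP h u i - θinf|)) κ₅)
    (hκ₆ : HasSum (fun p : (ℤ × ℤ) × Fin 2 =>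
      (|Dp h (fun k => (rhoP h u k) ^ 2) p.2 p.1| * |Dp h (Dp h (thetaP h u) p.2) p.2 p.1| +
       |Dm h (fun k => (rhoP h u k) ^ 2) p.2 p.1| * |Dm h (Dm h (thetaP h u) p.2) p.2 p.1| +
       h * (rhoP h u p.1) ^ 2 * |Lj h (Lj h (thetaP h u) p.2) p.2 p.1|) *
      |thetaP h u p.1 - θinf|) κ₆)
    (hκ₇ : HasSum (fun p : (ℤ × ℤ) × Fin 2 =>
      (|Dp h (rhoP h u) p.2 p.1| ^ 2 * |Dp h (thetaP h u) p.2 p.1| +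
       |Dm h (rhoP h u) p.2 p.1| ^ 2 * |Dm h (thetaP h u) p.2 p.1|) *
      |thetaP h u p.1 - θinf|) κ₇) :
    (∑' p : (ℤ × ℤ) × Fin 2, ENNReal.ofReal
        ((rhoP h u p.1) ^ 2 *
          (|Dp h (thetaP h u) p.2 p.1| ^ 2 + |Dm h (thetaP h u) p.2 p.1| ^ 2)))
      ≤ ENNReal.ofReal
          (4 * (κ₂ + 2 * Real.exp (2 * π) * κ₃ + 2 * Real.exp (2 * π) * κ₄ +
            2 * κ₅ + κ₆ + κ₇) * h) :=
  statement0_general h hh u f Lf κ₀ hκ₀ heq hH κ₁ hκ₁ θinf κ₂ κ₃ κ₄ κ₅ κ₆ κ₇ hκ₂ hκ₃ hκ₄ hκ₅ hκ₆ hκ₇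
end
end

section
/- Let 0 < h ≤ 1 and define u : ℤ² → ℝ by u_i := h·i₂ + (h/π)·e^{−(h·i₂)²}·arctan(h·i₁). Then u is injective on ℤ². -/
noncomputable section

open Real

open FK

namespace FK

/-- The function of Example 5.2 of the paper (lattice encoding):
`u_i := h·i₂ + (h/π)·e^{−(h·i₂)²}·arctan(h·i₁)`. -/
def uEx2 (h : ℝ) (i : ℤ × ℤ) : ℝ :=
  h * (i.2 : ℝ) +
    h / Real.pi * Real.exp (-(h * (i.2 : ℝ)) ^ 2) * Real.arctan (h * (i.1 : ℝ))

end FK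

/-! The perturbation term of `uEx2 h i` has modulus `< (h/π)(π/2) = h/2`, so `uEx2 h i` lies
strictly within `h/2` of `h·i₂`; hence equal values force equal `i₂`.  Along a row the
perturbation is a positive multiple of the injective `arctan (h·i₁)`. -/

theorem abs_exp_neg_sq_mul_arctan_lt (t s : ℝ) : |exp (-t ^ 2) * arctan s| < π / 2 := by
  rw [abs_mul, abs_of_pos (exp_pos _)]
  calc exp (-t ^ 2) * |arctan s| ≤ 1 * |arctan s| := by
        gcongr
        exact exp_le_one_iff.mpr (neg_nonpos.mpr (sq_nonneg t))
    _ < π / 2 := by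
        rw [one_mul, abs_lt]
        exact ⟨neg_pi_div_two_lt_arctan s, arctan_lt_pi_div_two s⟩

theorem Int.eq_of_abs_sub_mul_lt_half {h x : ℝ} {m n : ℤ} (hh : 0 < h)
    (hm : |x - h * m| < h / 2) (hn : |x - h * n| < h / 2) : m = n := by
  have hmn : |h * ((m - n : ℤ) : ℝ)| < h * 1 := by
    calc |h * ((m - n : ℤ) : ℝ)| = |(x - h * n) - (x - h * m)| := by push_cast; ring_nf
      _ ≤ |x - h * n| + |x - h * m| := abs_sub _ _
      _ < h * 1 := by linarith
  rwa [abs_mul, abs_of_pos hh, mul_lt_mul_iff_right₀ hh, ← Int.cast_abs, ← Int.cast_one,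
    Int.cast_lt, Int.abs_lt_one_iff, sub_eq_zero] at hmn

namespace FK

theorem abs_uEx2_sub_lt {h : ℝ} (hh : 0 < h) (i : ℤ × ℤ) : |uEx2 h i - h * i.2| < h / 2 := by
  have hc : 0 < h / π := div_pos hh pi_pos
  calc |uEx2 h i - h * i.2| = |h / π * (exp (-(h * i.2) ^ 2) * arctan (h * i.1))| := by
        rw [uEx2]; ring_nf
    _ = h / π * |exp (-(h * i.2) ^ 2) * arctan (h * i.1)| := by rw [abs_mul, abs_of_pos hc]
    _ < h / π * (π / 2) := mul_lt_mul_of_pos_left (abs_exp_neg_sq_mul_arctan_lt _ _) hc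
    _ = h / 2 := by field_simp

end FK

theorem statement17_general
    (h : ℝ) (hh : 0 < h) :
    Function.Injective (uEx2 h) := by
  intro a b hab
  have hsnd : a.2 = b.2 :=
    Int.eq_of_abs_sub_mul_lt_half hh (abs_uEx2_sub_lt hh a) (hab ▸ abs_uEx2_sub_lt hh b)
  have harctan : arctan (h * a.1) = arctan (h * b.1) := by
    simpa [uEx2, hsnd, hh.ne', pi_ne_zero, exp_ne_zero] using hab
  have hfst : a.1 = b.1 := by
    exact_mod_cast mul_left_cancel₀ hh.ne' (arctan_injective harctan)
  exact Prod.ext hfst hsnd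

/-- Example 5.2 of the paper, injectivity.  The function `uEx2` is
injective on `ℤ²`. -/
theorem statement17
    (h : ℝ) (hh : 0 < h) (h1 : h ≤ 1) :
    Function.Injective (uEx2 h) :=
  statement17_general h hh
end
end
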